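/- Let ξ : [0,T] → ℝ be absolutely continuous and λ ∈ L²(0,T) satisfy −ξ̇(t) + αλ(t) = 0 for a.e. t, with α > 0, and suppose λ(t) max(ξ(t), 0) ≥ 0 for a.e. t. Then max(ξ(t), 0)² ≤ max(ξ(T), 0)² for all t ∈ [0,T]. -/

import Mathlib

open MeasureTheory

/-- If `ξ` is absolutely continuous on `[0,T]` with derivative `ξ'`,
`λ ∈ L²(0,T)` satisfies `−ξ̇ + αλ = 0` a.e. with `α > 0`, and
`λ · max(ξ, 0) ≥ 0` a.e., then `max(ξ(t),0)² ≤ max(ξ(T),0)²` on `[0,T]`. -/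
theorem stmt12 (T α : ℝ) (hT : 0 < T) (hα : 0 < α)
    (ξ ξ' lam : ℝ → ℝ)
    (hint : IntervalIntegrable ξ' volume 0 T)
    (hAC : ∀ t ∈ Set.Icc 0 T, ξ t = ξ 0 + ∫ s in (0:ℝ)..t, ξ' s)
    (hlam : MemLp lam 2 (volume.restrict (Set.Ioc 0 T)))
    (hode : ∀ᵐ t ∂(volume.restrict (Set.Ioc 0 T)), -ξ' t + α * lam t = 0)
    (hsign : ∀ᵐ t ∂(volume.restrict (Set.Ioc 0 T)), 0 ≤ lam t * max (ξ t) 0) :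
    ∀ t ∈ Set.Icc 0 T, max (ξ t) 0 ^ 2 ≤ max (ξ T) 0 ^ 2 := by
  -- key a.e. fact: where ξ > 0, the derivative is nonnegative
  have hkey : ∀ᵐ s ∂(volume.restrict (Set.Ioc 0 T)), 0 < ξ s → 0 ≤ ξ' s := by
    filter_upwards [hode, hsign] with s h1 h2 hpos
    have hmax : max (ξ s) 0 = ξ s := max_eq_left hpos.le
    rw [hmax] at h2
    have hlam0 : 0 ≤ lam s := nonneg_of_mul_nonneg_right (by rwa [mul_comm] at h2) hpos
    nlinarith [mul_nonneg hα.le hlam0]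
  -- continuity of ξ on [0,T]
  have hcont : ContinuousOn ξ (Set.Icc 0 T) := by
    have h1 : ContinuousOn (fun x => ξ 0 + ∫ s in (0:ℝ)..x, ξ' s) (Set.Icc 0 T) := by
      have := intervalIntegral.continuousOn_primitive_interval'
        (a := 0) (b₁ := 0) (b₂ := T) (μ := volume) (f := ξ') hint
        (by simp [Set.uIcc_of_le hT.le, hT.le])
      rw [Set.uIcc_of_le hT.le] at this
      exact continuousOn_const.add this
    exact h1.congr (fun x hx => hAC x hx)
  intro t ht
  -- suffices: max (ξ t) 0 ≤ max (ξ T) 0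
  have main : max (ξ t) 0 ≤ max (ξ T) 0 := by
    by_contra hcon
    push_neg at hcon
    have hξt : 0 < ξ t := by
      rcases le_or_gt (ξ t) 0 with h | h
      · rw [max_eq_right h] at hcon; linarith [le_max_right (ξ T) 0]
      · exact h
    rw [max_eq_left hξt.le] at hcon
    set M := max (ξ T) 0 with hM
    have hM0 : 0 ≤ M := le_max_right _ _
    set c := (M + ξ t) / 2 with hc
    have hcM : M < c := by simp only [hc]; linarith
    have hcξ : c < ξ t := by simp only [hc]; linarith
    have hc0 : 0 < c := lt_of_le_of_lt hM0 hcM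
    have htT : t < T := by
      rcases eq_or_lt_of_le ht.2 with h | h
      · exfalso; rw [h] at hcon; linarith [le_max_left (ξ T) 0]
      · exact h
    -- first time after t where ξ drops to ≤ c
    set S := {s : ℝ | s ∈ Set.Icc t T ∧ ξ s ≤ c} with hS
    have hTS : T ∈ S := ⟨⟨htT.le, le_rfl⟩, le_trans (le_max_left _ _) hcM.le⟩
    have hSne : S.Nonempty := ⟨T, hTS⟩
    have hSbdd : BddBelow S := ⟨t, fun s hs => hs.1.1⟩
    have hSclosed : IsClosed S := by
      have : S = Set.Icc t T ∩ ξ ⁻¹' Set.Iic c := by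
        ext s; simp [hS, Set.mem_Icc, and_assoc]
      rw [this]
      exact ContinuousOn.preimage_isClosed_of_isClosed
        (hcont.mono (Set.Icc_subset_Icc ht.1 le_rfl)) isClosed_Icc isClosed_Iic
    set v := sInf S with hv
    have hvS : v ∈ S := hSclosed.csInf_mem hSne hSbdd
    have hvt : t < v := by
      rcases eq_or_lt_of_le hvS.1.1 with h | h
      · exfalso; have := hvS.2; rw [← h] at this; linarith
      · exact h
    have hvT : v ≤ T := hvS.1.2
    -- ξ > c on [t, v)
    have hgt : ∀ s ∈ Set.Ico t v, c < ξ s := by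
      intro s hs
      by_contra h
      push_neg at h
      exact absurd (csInf_le hSbdd ⟨⟨hs.1, le_trans hs.2.le hvT⟩, h⟩) (not_le.mpr hs.2)
    -- ξ' ≥ 0 a.e. on Ioo t v, hence on Icc t v
    have hae : ∀ᵐ s ∂(volume.restrict (Set.Icc t v)), 0 ≤ ξ' s := by
      rw [Measure.restrict_congr_set (Ioo_ae_eq_Icc (μ := volume) (a := t) (b := v)).symm]
      have hsub : Set.Ioo t v ⊆ Set.Ioc 0 T :=
        fun s hs => ⟨lt_of_le_of_lt ht.1 hs.1, le_trans hs.2.le hvT⟩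
      have h1 := ae_restrict_of_ae_restrict_of_subset hsub hkey
      filter_upwards [h1, ae_restrict_mem measurableSet_Ioo] with s h1 hmem
      exact h1 (lt_trans hc0 (hgt s ⟨hmem.1.le, hmem.2⟩))
    -- integrability
    have hi1 : IntervalIntegrable ξ' volume 0 t := by
      apply hint.mono_set
      rw [Set.uIcc_of_le ht.1, Set.uIcc_of_le hT.le]
      exact Set.Icc_subset_Icc le_rfl ht.2
    have hi2 : IntervalIntegrable ξ' volume t v := by
      apply hint.mono_set
      rw [Set.uIcc_of_le hvt.le, Set.uIcc_of_le hT.le]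
      exact Set.Icc_subset_Icc ht.1 hvT
    have hnn : 0 ≤ ∫ s in t..v, ξ' s :=
      intervalIntegral.integral_nonneg_of_ae_restrict hvt.le hae
    have hval : ξ v = ξ t + ∫ s in t..v, ξ' s := by
      have h1 := hAC v ⟨le_trans ht.1 hvt.le, hvT⟩
      have h2 := hAC t ht
      rw [h1, h2, ← intervalIntegral.integral_add_adjacent_intervals hi1 hi2]
      ring
    have : c < ξ v := by rw [hval]; linarith
    linarith [hvS.2]
  have h0 : 0 ≤ max (ξ t) 0 := le_max_right _ _
  calc max (ξ t) 0 ^ 2 ≤ max (ξ T) 0 ^ 2 := by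
        apply pow_le_pow_left₀ h0 main
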